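/- arXiv:1111.2127 — 7 statements merged into one kernel-verified Lean document; each statement's English description precedes it below -/
import Mathlib

section
/- Let h : 𝒞 → ℝ and let v₁ ∈ V(G) \ {s,t}. Then h(C) = 0 for all cuts C not crossed by the edge s → v₁ (i.e., all cuts with v₁ ∈ L(C)) if and only if h can be written in the form Σ_{V ⊆ V(G)\{s,t,v₁}} c_V (e_V + e_{V ∪ {v₁}}) for some real coefficients c_V. -/
/-!
On the cuts with `v₁ ∈ R(C)` one has `e_W + e_{W ∪ {v₁}} = 2 e_W`, and on the cuts with
`v₁ ∈ L(C)` this sum vanishes, so every such combination vanishes where required. Conversely,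
cuts with `v₁ ∈ R(C)` are determined by their restriction to `S = V(G) \ {s, t, v₁}`, and the
characters `e_W`, `W ⊆ S`, are orthogonal on them; Fourier inversion over `S` therefore writes
any `h` vanishing on the other cuts in the required form.
-/

open Finset

abbrev STCut (V : Type*) (s t : V) := {C : V → Bool // C s = true ∧ C t = false}

def eFun {V : Type*} [DecidableEq V] {s t : V} (W : Finset V) (C : STCut V s t) : ℝ :=
  (-1 : ℝ) ^ (W.filter (fun v => C.1 v = true)).card

section Fourier

variable {V : Type*} [DecidableEq V] {s t : V}

lemma eFun_eq_prod (W : Finset V) (C : STCut V s t) :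
    eFun W C = ∏ v ∈ W, (if C.1 v = true then (-1 : ℝ) else 1) := by
  rw [eFun, ← prod_const, ← prod_filter]

lemma eFun_add_eFun_insert {v : V} {W : Finset V} (hv : v ∉ W) (C : STCut V s t) :
    eFun W C + eFun (insert v W) C = if C.1 v = true then 0 else 2 * eFun W C := by
  rw [eFun_eq_prod, eFun_eq_prod, prod_insert hv]
  split_ifs <;> ring

lemma sum_powerset_eFun_mul_eFun [DecidableEq (STCut V s t)] (S : Finset V)
    {C C' : STCut V s t} (hagree : ∀ v ∉ S, C.1 v = C'.1 v) :
    ∑ W ∈ S.powerset, eFun W C * eFun W C' = if C = C' then (2 : ℝ) ^ #S else 0 := by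
  have hprod : ∑ W ∈ S.powerset, eFun W C * eFun W C' =
      ∏ v ∈ S, (1 + (if C.1 v = true then (-1 : ℝ) else 1) *
        (if C'.1 v = true then (-1 : ℝ) else 1)) := by
    simp only [prod_one_add, eFun_eq_prod, prod_mul_distrib]
  rw [hprod]
  split_ifs with hCC'
  · subst hCC'
    rw [← prod_const]
    refine prod_congr rfl fun v _ => ?_
    split_ifs <;> norm_num
  · obtain ⟨v, hv⟩ : ∃ v, C.1 v ≠ C'.1 v := by
      by_contra! hcon
      exact hCC' (Subtype.ext (funext hcon))
    have hvS : v ∈ S := by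
      by_contra hvS
      exact hv (hagree v hvS)
    refine prod_eq_zero hvS ?_
    cases hb : C.1 v <;> cases hb' : C'.1 v <;> simp_all

variable [Fintype V]

def cutFourierCoeff (h : STCut V s t → ℝ) (W : Finset V) : ℝ :=
  ∑ C, h C * eFun W C

lemma sum_powerset_cutFourierCoeff_mul_eFun (S : Finset V) (h : STCut V s t → ℝ)
    (C₀ : STCut V s t) (hsupp : ∀ C, h C ≠ 0 → ∀ v ∉ S, C.1 v = C₀.1 v) :
    ∑ W ∈ S.powerset, cutFourierCoeff h W * eFun W C₀ = 2 ^ #S * h C₀ := by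
  calc ∑ W ∈ S.powerset, cutFourierCoeff h W * eFun W C₀
      = ∑ C, h C * ∑ W ∈ S.powerset, eFun W C * eFun W C₀ := by
        simp only [cutFourierCoeff, sum_mul, mul_sum, mul_assoc]
        exact sum_comm
    _ = ∑ C, h C * if C = C₀ then (2 : ℝ) ^ #S else 0 := by
        refine sum_congr rfl fun C _ => ?_
        by_cases hC : h C = 0
        · simp [hC]
        · rw [sum_powerset_eFun_mul_eFun S (hsupp C hC)]
    _ = 2 ^ #S * h C₀ := by simp [mul_comm]

end Fourier

lemma filter_notMem_triple_eq_powerset_sdiff {V : Type*} [Fintype V] [DecidableEq V] (s t v₁ : V) :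
    univ.filter (fun W : Finset V => s ∉ W ∧ t ∉ W ∧ v₁ ∉ W) = (univ \ {s, t, v₁}).powerset := by
  ext W
  simp only [mem_filter, mem_univ, true_and, mem_powerset, subset_sdiff, subset_univ,
    disjoint_insert_right, disjoint_singleton_right]

lemma STCut.apply_eq_of_notMem_sdiff {V : Type*} [Fintype V] [DecidableEq V] {s t v₁ : V}
    {C C' : STCut V s t} (hC : C.1 v₁ = false) (hC' : C'.1 v₁ = false) :
    ∀ v ∉ univ \ {s, t, v₁}, C.1 v = C'.1 v := by
  intro v hv
  obtain rfl | rfl | rfl : v = s ∨ v = t ∨ v = v₁ := by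
    simp only [mem_sdiff, mem_univ, true_and, mem_insert, mem_singleton] at hv
    tauto
  exacts [C.2.1.trans C'.2.1.symm, C.2.2.trans C'.2.2.symm, hC.trans hC'.symm]

theorem stmt2_general {V : Type*} [Fintype V] [DecidableEq V] (s t v₁ : V) (h : STCut V s t → ℝ) :
    (∀ C : STCut V s t, C.1 v₁ = true → h C = 0) ↔
      ∃ c : Finset V → ℝ,
        h = ∑ W ∈ Finset.univ.filter (fun W : Finset V => s ∉ W ∧ t ∉ W ∧ v₁ ∉ W),
          c W • ((eFun W : STCut V s t → ℝ) + eFun (insert v₁ W)) := by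
  set S : Finset V := univ \ {s, t, v₁}
  have hv₁ : ∀ W ∈ S.powerset, v₁ ∉ W := fun W hW hv =>
    (mem_sdiff.mp (mem_powerset.mp hW hv)).2 (by simp)
  simp only [filter_notMem_triple_eq_powerset_sdiff, funext_iff, Finset.sum_apply, Pi.smul_apply,
    Pi.add_apply, smul_eq_mul]
  constructor
  · intro hvan
    refine ⟨fun W => (2 ^ (#S + 1))⁻¹ * cutFourierCoeff h W, fun C₀ => ?_⟩
    cases hC₀ : C₀.1 v₁
    · have hsupp : ∀ C, h C ≠ 0 → ∀ v ∉ S, C.1 v = C₀.1 v := fun C hC =>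
        STCut.apply_eq_of_notMem_sdiff (by simpa using mt (hvan C) hC) hC₀
      calc h C₀ = (2 ^ (#S + 1))⁻¹ * 2 * (2 ^ #S * h C₀) := by field_simp; ring
        _ = _ := by
          rw [← sum_powerset_cutFourierCoeff_mul_eFun S h C₀ hsupp, mul_sum]
          refine sum_congr rfl fun W hW => ?_
          rw [eFun_add_eFun_insert (hv₁ W hW), hC₀]
          simp only [Bool.false_eq_true, if_false]
          ring
    · rw [hvan C₀ hC₀]
      exact (sum_eq_zero fun W hW => by simp [eFun_add_eFun_insert (hv₁ W hW), hC₀]).symm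
  · rintro ⟨c, hc⟩ C hC
    rw [hc C]
    exact sum_eq_zero fun W hW => by simp [eFun_add_eFun_insert (hv₁ W hW), hC]

theorem stmt2 {V : Type*} [Fintype V] [DecidableEq V] (s t v₁ : V) (hst : s ≠ t)
    (hv₁s : v₁ ≠ s) (hv₁t : v₁ ≠ t) (h : STCut V s t → ℝ) :
    (∀ C : STCut V s t, C.1 v₁ = true → h C = 0) ↔
      ∃ c : Finset V → ℝ,
        h = ∑ W ∈ Finset.univ.filter (fun W : Finset V => s ∉ W ∧ t ∉ W ∧ v₁ ∉ W),
          c W • ((eFun W : STCut V s t → ℝ) + eFun (insert v₁ W)) :=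
  stmt2_general s t v₁ h
end

section
/- Let h : 𝒞 → ℝ and let v₁ ∈ V(G) \ {s,t}. Then h(C) = 0 for all cuts C not crossed by the edge v₁ → t (i.e., all cuts with v₁ ∈ R(C)) if and only if h can be written in the form Σ_{V ⊆ V(G)\{s,t,v₁}} c_V (e_V − e_{V ∪ {v₁}}). -/
/-! On a cut with `v₁ ∈ L(C)` we have `e_W - e_{W ∪ {v₁}} = 2 e_W`, and on any other cut this
difference vanishes. A cut with `v₁` on the left is determined by its restriction to
`U = V \ {s, t, v₁}`, and on such cuts the characters `e_W`, `W ⊆ U`, are orthogonal. Fourier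
inversion therefore writes any `h` vanishing off these cuts in the required form, with
`c_W = 2^{-|U|-1} ∑_C h(C) e_W(C)`. -/

open Finset

lemma Finset.filter_notMem_eq_powerset_sdiff {V : Type*} [Fintype V] [DecidableEq V]
    (s t v : V) :
    univ.filter (fun W : Finset V => s ∉ W ∧ t ∉ W ∧ v ∉ W) = (univ \ {s, t, v}).powerset := by
  ext W
  simp only [mem_filter, mem_univ, true_and, mem_powerset, subset_sdiff, subset_univ,
    disjoint_insert_right, disjoint_singleton_right]

namespace STCut

variable {V : Type*} [DecidableEq V] {s t : V}

lemma eFun_eq_prod (W : Finset V) (C : STCut V s t) :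
    eFun W C = ∏ v ∈ W, (if C.1 v then (-1 : ℝ) else 1) := by
  rw [prod_ite, prod_const, prod_const, one_pow, mul_one, eFun]

lemma eFun_sub_eFun_insert {v : V} {W : Finset V} (hv : v ∉ W) (C : STCut V s t) :
    eFun W C - eFun (insert v W) C = if C.1 v then 2 * eFun W C else 0 := by
  rw [eFun_eq_prod, eFun_eq_prod, prod_insert hv]
  split_ifs <;> ring

lemma sum_powerset_eFun_mul_eFun (U : Finset V) (C C' : STCut V s t) :
    ∑ W ∈ U.powerset, eFun W C * eFun W C' =
      if ∀ u ∈ U, C.1 u = C'.1 u then (2 : ℝ) ^ #U else 0 := by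
  have factor : ∀ u, (if C.1 u then (-1 : ℝ) else 1) * (if C'.1 u then -1 else 1) + 1 =
      if C.1 u = C'.1 u then 2 else 0 := by
    intro u
    cases C.1 u <;> cases C'.1 u <;> norm_num
  simp_rw [eFun_eq_prod, ← prod_mul_distrib, ← prod_add_one, factor, prod_ite_zero, prod_const]

lemma eq_of_forall_mem_sdiff_eq [Fintype V] {v : V} {C C' : STCut V s t}
    (hU : ∀ u ∈ univ \ {s, t, v}, C.1 u = C'.1 u) (hv : C.1 v = C'.1 v) : C = C' := by
  refine Subtype.ext (funext fun u => ?_)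
  by_cases hu : u ∈ univ \ {s, t, v}
  · exact hU u hu
  · simp only [mem_sdiff, mem_univ, true_and, not_not, mem_insert, mem_singleton] at hu
    rcases hu with rfl | rfl | rfl
    · rw [C.2.1, C'.2.1]
    · rw [C.2.2, C'.2.2]
    · exact hv

lemma sum_powerset_sum_mul_eFun_mul_eFun [Fintype V] {v : V} (h : STCut V s t → ℝ)
    (hh : ∀ C : STCut V s t, C.1 v = false → h C = 0) {C₀ : STCut V s t} (hC₀ : C₀.1 v = true) :
    ∑ W ∈ (univ \ {s, t, v}).powerset, (∑ C, h C * eFun W C) * eFun W C₀ =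
      2 ^ #(univ \ {s, t, v}) * h C₀ := by
  calc _ = ∑ C, h C * ∑ W ∈ (univ \ {s, t, v}).powerset, eFun W C * eFun W C₀ := by
        simp_rw [sum_mul, mul_sum, mul_assoc]
        exact sum_comm
    _ = ∑ C, if C = C₀ then h C₀ * 2 ^ #(univ \ {s, t, v}) else 0 := by
        refine sum_congr rfl fun C _ => ?_
        rw [sum_powerset_eFun_mul_eFun]
        cases hC : C.1 v
        · have hne : C ≠ C₀ := fun hCC => by simp [hCC, hC₀] at hC
          simp [hh C hC, hne]
        · have hiff : (∀ u ∈ univ \ {s, t, v}, C.1 u = C₀.1 u) ↔ C = C₀ :=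
            ⟨fun hU => eq_of_forall_mem_sdiff_eq hU (hC.trans hC₀.symm), fun hCC _ _ => hCC ▸ rfl⟩
          simp only [hiff]
          split_ifs with hCC
          · rw [hCC]
          · ring
    _ = _ := by rw [sum_ite_eq', if_pos (mem_univ _), mul_comm]

end STCut

open STCut

theorem stmt3_general {V : Type*} [Fintype V] [DecidableEq V] (s t v₁ : V) (h : STCut V s t → ℝ) :
    (∀ C : STCut V s t, C.1 v₁ = false → h C = 0) ↔
      ∃ c : Finset V → ℝ,
        h = ∑ W ∈ Finset.univ.filter (fun W : Finset V => s ∉ W ∧ t ∉ W ∧ v₁ ∉ W),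
          c W • ((eFun W : STCut V s t → ℝ) - eFun (insert v₁ W)) := by
  rw [filter_notMem_eq_powerset_sdiff]
  set U : Finset V := univ \ {s, t, v₁}
  have hv₁ : ∀ W ∈ U.powerset, v₁ ∉ W := fun W hW hv => by
    simpa [U] using mem_powerset.1 hW hv
  constructor
  · intro hh
    refine ⟨fun W => (2 ^ (#U + 1))⁻¹ * ∑ C, h C * eFun W C, funext fun C₀ => ?_⟩
    simp only [Finset.sum_apply, Pi.smul_apply, Pi.sub_apply, smul_eq_mul]
    rw [sum_congr rfl fun W hW => by rw [eFun_sub_eFun_insert (hv₁ W hW)]]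
    cases hC₀ : C₀.1 v₁
    · simp [hh C₀ hC₀]
    · simp only [if_true]
      calc h C₀ = (2 ^ (#U + 1))⁻¹ * 2 * (2 ^ #U * h C₀) := by field_simp; ring
        _ = _ := by
          rw [← sum_powerset_sum_mul_eFun_mul_eFun h hh hC₀, mul_sum]
          exact sum_congr rfl fun W _ => by ring
  · rintro ⟨c, rfl⟩ C hC
    simp only [Finset.sum_apply, Pi.smul_apply, Pi.sub_apply, smul_eq_mul]
    exact sum_eq_zero fun W hW => by simp [eFun_sub_eFun_insert (hv₁ W hW), hC]

theorem stmt3 {V : Type*} [Fintype V] [DecidableEq V] (s t v₁ : V) (hst : s ≠ t)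
    (hv₁s : v₁ ≠ s) (hv₁t : v₁ ≠ t) (h : STCut V s t → ℝ) :
    (∀ C : STCut V s t, C.1 v₁ = false → h C = 0) ↔
      ∃ c : Finset V → ℝ,
        h = ∑ W ∈ Finset.univ.filter (fun W : Finset V => s ∉ W ∧ t ∉ W ∧ v₁ ∉ W),
          c W • ((eFun W : STCut V s t → ℝ) - eFun (insert v₁ W)) :=
  stmt3_general s t v₁ h
end

section
/- Let G' be a switching network built from a finite family H of functions h : 𝒞 → ℝ including h_{s'} ≡ −1 and h_{t'} ≡ 1, where there is an edge labeled e (a directed edge of G) between vertices v', w' of G' iff h_{v'}(C) = h_{w'}(C) for every cut C not crossed by e. Then G' is sound: if some input graph G is accepted (there is a path from s' to t' in G' whose edge labels all lie in E(G)), then G contains a directed path from s to t. -/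
theorem Fin.apply_eq_apply_zero_of_castSucc_eq_succ {α : Type*} {n : ℕ} (f : Fin (n + 1) → α)
    (hf : ∀ i : Fin n, f i.castSucc = f i.succ) (i : Fin (n + 1)) : f i = f 0 :=
  Fin.induction rfl (fun j ih => (hf j).symm.trans ih) i

open Classical in
noncomputable def reachableCut {V : Type*} (E : V → V → Prop) (s t : V)
    (h : ¬Relation.ReflTransGen E s t) : STCut V s t :=
  ⟨fun v => decide (Relation.ReflTransGen E s v), by simpa [Relation.ReflTransGen.refl] using h⟩

theorem reachableCut_not_crossed {V : Type*} {E : V → V → Prop} {s t : V}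
    (h : ¬Relation.ReflTransGen E s t) {a b : V} (hab : E a b) :
    ¬((reachableCut E s t h).1 a = true ∧ (reachableCut E s t h).1 b = false) := by
  rintro ⟨ha, hb⟩
  simp only [reachableCut, decide_eq_true_eq, decide_eq_false_iff_not] at ha hb
  exact hb (ha.tail hab)

theorem stmt6_general {V : Type*} (s t : V) (E : V → V → Prop)
    {ι : Type*} (hfun : ι → STCut V s t → ℝ) (s' t' : ι)
    (hs' : ∀ C, hfun s' C = -1) (ht' : ∀ C, hfun t' C = 1)
    (haccept : ∃ n, ∃ p : Fin (n + 1) → ι, p 0 = s' ∧ p (Fin.last n) = t' ∧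
      ∀ i : Fin n, ∃ a b : V, E a b ∧
        ∀ C : STCut V s t, ¬(C.1 a = true ∧ C.1 b = false) →
          hfun (p i.castSucc) C = hfun (p i.succ) C) :
    Relation.ReflTransGen E s t := by
  by_contra hreach
  obtain ⟨n, p, hp0, hpn, hstep⟩ := haccept
  have hconst : hfun (p (Fin.last n)) (reachableCut E s t hreach) =
      hfun (p 0) (reachableCut E s t hreach) := by
    refine Fin.apply_eq_apply_zero_of_castSucc_eq_succ (fun i => hfun (p i) _) (fun i => ?_) _
    obtain ⟨a, b, hab, hagree⟩ := hstep i
    exact hagree _ (reachableCut_not_crossed hreach hab)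
  rw [hpn, hp0, hs', ht'] at hconst
  norm_num at hconst

/-- Soundness of switching networks built from functions on cuts: if there is a path from
`s'` to `t'` in the network whose edge labels all lie in `E`, where consecutive network
vertices agree on every cut not crossed by the label, then `E` has a path from `s` to `t`. -/
theorem stmt6 {V : Type*} [Fintype V] (s t : V) (hst : s ≠ t) (E : V → V → Prop)
    {ι : Type*} (hfun : ι → STCut V s t → ℝ) (s' t' : ι)
    (hs' : ∀ C, hfun s' C = -1) (ht' : ∀ C, hfun t' C = 1)
    (haccept : ∃ n, ∃ p : Fin (n + 1) → ι, p 0 = s' ∧ p (Fin.last n) = t' ∧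
      ∀ i : Fin n, ∃ a b : V, E a b ∧
        ∀ C : STCut V s t, ¬(C.1 a = true ∧ C.1 b = false) →
          hfun (p i.castSucc) C = hfun (p i.succ) C) :
    Relation.ReflTransGen E s t :=
  stmt6_general s t E hfun s' t' hs' ht' haccept
end

section
/- Let v₁, …, v_m be distinct vertices in V(G)\{s,t}, set V_i = {v₁,…,v_i} and V_0 = ∅. Suppose E is a set of directed edges such that for each i ∈ [1,m], either s → v_i ∈ E or v_i → t ∈ E. Then there exist signs ε_0 = −1, ε_1, …, ε_m ∈ {−1,+1} such that for each i ∈ [0, m−1], the function ε_{i+1}e_{V_{i+1}} − ε_i e_{V_i} vanishes on all cuts not crossed by s → v_{i+1} (if s → v_{i+1} ∈ E) or vanishes on all cuts not crossed by v_{i+1} → t (if v_{i+1} → t ∈ E). In particular one can reach either e_{V_m} or −e_{V_m} from −e_∅ in m steps, each step using an edge of E. -/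
/-- `Vset v j = {v_1, …, v_j}`, the first `j` of the given vertices. -/
def Vset {V : Type*} [DecidableEq V] {m : ℕ} (v : Fin m → V) (j : ℕ) : Finset V :=
  (Finset.univ.filter (fun i : Fin m => (i : ℕ) < j)).image v

lemma Vset_succ {V : Type*} [DecidableEq V] {m : ℕ} (v : Fin m → V) (i : Fin m) :
    Vset v ((i : ℕ) + 1) = insert (v i) (Vset v i) := by
  ext x
  simp only [Vset, Finset.mem_image, Finset.mem_filter, Finset.mem_univ, true_and,
    Finset.mem_insert, Nat.lt_succ_iff, le_iff_lt_or_eq, Fin.val_inj]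
  grind

lemma apply_notMem_Vset {V : Type*} [DecidableEq V] {m : ℕ} {v : Fin m → V}
    (hinj : Function.Injective v) (i : Fin m) : v i ∉ Vset v i := by
  simp [Vset, hinj.eq_iff]

section eFun

variable {V : Type*} [DecidableEq V] {s t : V}

lemma eFun_insert_of_left {W : Finset V} {x : V} (hx : x ∉ W) {C : STCut V s t}
    (hC : C.1 x = true) : eFun (insert x W) C = -eFun W C := by
  rw [eFun, Finset.filter_insert, if_pos hC,
    Finset.card_insert_of_notMem fun h => hx (Finset.mem_filter.1 h).1, pow_succ, eFun, mul_neg_one]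

lemma eFun_insert_of_right (W : Finset V) {x : V} {C : STCut V s t} (hC : C.1 x = false) :
    eFun (insert x W) C = eFun W C := by
  rw [eFun, Finset.filter_insert, if_neg (by simp [hC]), eFun]

variable {m : ℕ} {v : Fin m → V}

lemma eFun_Vset_succ_of_left (hinj : Function.Injective v) {i : Fin m} {C : STCut V s t}
    (hC : C.1 (v i) = true) : eFun (Vset v ((i : ℕ) + 1)) C = -eFun (Vset v i) C := by
  rw [Vset_succ, eFun_insert_of_left (apply_notMem_Vset hinj i) hC]

lemma eFun_Vset_succ_of_right {i : Fin m} {C : STCut V s t} (hC : C.1 (v i) = false) :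
    eFun (Vset v ((i : ℕ) + 1)) C = eFun (Vset v i) C := by
  rw [Vset_succ, eFun_insert_of_right _ hC]

end eFun

lemma Fin.partialProd_eq_one_or_eq_neg_one {M : Type*} [Monoid M] [HasDistribNeg M] {n : ℕ}
    {f : Fin n → M} (hf : ∀ j, f j = 1 ∨ f j = -1) (i : Fin (n + 1)) :
    Fin.partialProd f i = 1 ∨ Fin.partialProd f i = -1 := by
  induction i using Fin.induction with
  | zero => exact .inl (Fin.partialProd_zero f)
  | succ j ih =>
    rw [Fin.partialProd_succ]
    rcases ih with h | h <;> rcases hf j with h' | h' <;> simp [h, h']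

theorem stmt8_general {V : Type*} [DecidableEq V] (s t : V)
    (m : ℕ) (v : Fin m → V) (hinj : Function.Injective v)
    (E : V → V → Prop) (hE : ∀ i, E s (v i) ∨ E (v i) t) :
    ∃ ε : Fin (m + 1) → ℝ, ε 0 = -1 ∧ (∀ i, ε i = 1 ∨ ε i = -1) ∧
      ∀ i : Fin m,
        (E s (v i) ∧ ∀ C : STCut V s t, C.1 (v i) = true →
          ε i.succ * eFun (Vset v ((i : ℕ) + 1)) C - ε i.castSucc * eFun (Vset v i) C = 0) ∨
        (E (v i) t ∧ ∀ C : STCut V s t, C.1 (v i) = false →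
          ε i.succ * eFun (Vset v ((i : ℕ) + 1)) C - ε i.castSucc * eFun (Vset v i) C = 0) := by
  classical
  -- Adding `v i` to the left side of a cut flips `e`, so the sign flips exactly at the `s`-edges.
  set f : Fin m → ℝ := fun j => if E s (v j) then -1 else 1
  have hf : ∀ j, f j = 1 ∨ f j = -1 := fun j => by by_cases h : E s (v j) <;> simp [f, h]
  refine ⟨fun i => -Fin.partialProd f i, by simp, fun i => ?_, fun i => ?_⟩
  · rcases Fin.partialProd_eq_one_or_eq_neg_one hf i with h | h <;> simp [h]
  simp only [Fin.partialProd_succ]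
  by_cases hEs : E s (v i)
  · refine .inl ⟨hEs, fun C hC => ?_⟩
    rw [eFun_Vset_succ_of_left hinj hC]
    simp only [f, if_pos hEs]
    ring
  · refine .inr ⟨(hE i).resolve_left hEs, fun C hC => ?_⟩
    rw [eFun_Vset_succ_of_right hC]
    simp only [f, if_neg hEs]
    ring

theorem stmt8 {V : Type*} [Fintype V] [DecidableEq V] (s t : V) (hst : s ≠ t)
    (m : ℕ) (v : Fin m → V) (hinj : Function.Injective v)
    (hvs : ∀ i, v i ≠ s) (hvt : ∀ i, v i ≠ t)
    (E : V → V → Prop) (hE : ∀ i, E s (v i) ∨ E (v i) t) :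
    ∃ ε : Fin (m + 1) → ℝ, ε 0 = -1 ∧ (∀ i, ε i = 1 ∨ ε i = -1) ∧
      ∀ i : Fin m,
        (E s (v i) ∧ ∀ C : STCut V s t, C.1 (v i) = true →
          ε i.succ * eFun (Vset v ((i : ℕ) + 1)) C - ε i.castSucc * eFun (Vset v i) C = 0) ∨
        (E (v i) t ∧ ∀ C : STCut V s t, C.1 (v i) = false →
          ε i.succ * eFun (Vset v ((i : ℕ) + 1)) C - ε i.castSucc * eFun (Vset v i) C = 0) :=
  stmt8_general s t m v hinj E hE
end

section
/- Fix positive integers x, y, k, N with y ≤ min(x,k) and x + k + 2 ≤ N. Then the hypergeometric probability p(y) = [C(x,y)·C(N−2−x, k−y)] / C(N−2, k) satisfies p(y) ≤ (xk/(N−x−k−2))^y, where C(a,b) denotes the binomial coefficient. -/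
/-!
Lowering the lower index of `C(n, i + 1)` to `i` multiplies it by `(i + 1) / (n - i)`, which is at
most `k / (n - k)` for `i < k`; hence `C(n, k - y) ≤ (k / (n - k))^y · C(n, k)`. Take `n = N - 2 - x`
and combine with `C(x, y) ≤ x^y` and `C(N - 2 - x, k) ≤ C(N - 2, k)`.
-/

namespace Nat

theorem choose_mul_sub_le_choose_succ_mul {n i k : ℕ} (hik : i < k) :
    n.choose i * (n - k) ≤ n.choose (i + 1) * k :=
  calc n.choose i * (n - k) ≤ n.choose i * (n - i) := Nat.mul_le_mul_left _ (by omega)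
    _ = n.choose (i + 1) * (i + 1) := (choose_succ_right_eq n i).symm
    _ ≤ n.choose (i + 1) * k := Nat.mul_le_mul_left _ hik

theorem choose_sub_mul_pow_le (n k : ℕ) {j : ℕ} (hjk : j ≤ k) :
    n.choose (k - j) * (n - k) ^ j ≤ k ^ j * n.choose k := by
  induction j with
  | zero => simp
  | succ j ih =>
    have hstep := choose_mul_sub_le_choose_succ_mul (n := n) (show k - (j + 1) < k by omega)
    rw [show k - (j + 1) + 1 = k - j by omega] at hstep
    calc n.choose (k - (j + 1)) * (n - k) ^ (j + 1)
        = n.choose (k - (j + 1)) * (n - k) * (n - k) ^ j := by ring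
      _ ≤ n.choose (k - j) * k * (n - k) ^ j := Nat.mul_le_mul_right _ hstep
      _ = k * (n.choose (k - j) * (n - k) ^ j) := by ring
      _ ≤ k * (k ^ j * n.choose k) := Nat.mul_le_mul_left _ (ih (by omega))
      _ = k ^ (j + 1) * n.choose k := by ring

theorem choose_mul_choose_sub_mul_pow_le (x m : ℕ) {y k : ℕ} (hyk : y ≤ k) :
    x.choose y * (m - x).choose (k - y) * (m - x - k) ^ y ≤ (x * k) ^ y * m.choose k :=
  calc x.choose y * (m - x).choose (k - y) * (m - x - k) ^ y
      = x.choose y * ((m - x).choose (k - y) * (m - x - k) ^ y) := by ring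
    _ ≤ x ^ y * (k ^ y * (m - x).choose k) :=
        Nat.mul_le_mul (choose_le_pow x y) (choose_sub_mul_pow_le (m - x) k hyk)
    _ ≤ x ^ y * (k ^ y * m.choose k) :=
        Nat.mul_le_mul_left _ (Nat.mul_le_mul_left _ (choose_le_choose k (Nat.sub_le m x)))
    _ = (x * k) ^ y * m.choose k := by ring

end Nat

theorem stmt10_general (x y k N : ℕ)
    (hyk : y ≤ k) (hN' : x + k + 2 < N) :
    ((x.choose y : ℝ) * ((N - 2 - x).choose (k - y) : ℝ)) / ((N - 2).choose k : ℝ) ≤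
      (((x : ℝ) * k) / ((N : ℝ) - x - k - 2)) ^ y := by
  have hgap : ((N - 2 - x - k : ℕ) : ℝ) = (N : ℝ) - x - k - 2 := by
    rw [Nat.cast_sub (by omega), Nat.cast_sub (by omega), Nat.cast_sub (by omega)]
    push_cast
    ring
  have hchoose_pos : (0 : ℝ) < ((N - 2).choose k : ℝ) := by
    exact_mod_cast Nat.choose_pos (by omega)
  have hgap_pos : (0 : ℝ) < (N : ℝ) - x - k - 2 := by
    rw [← hgap]
    exact_mod_cast (show 0 < N - 2 - x - k by omega)
  rw [div_pow, div_le_div_iff₀ hchoose_pos (pow_pos hgap_pos y), ← hgap]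
  exact_mod_cast Nat.choose_mul_choose_sub_mul_pow_le x (N - 2) hyk

/-- Hypergeometric tail bound: the probability that a uniformly random `k`-subset of an
`(N-2)`-element set meets a fixed `x`-element subset in exactly `y` elements is at most
`(xk/(N-x-k-2))^y`. -/
theorem stmt10 (x y k N : ℕ) (hx : 0 < x) (hy : 0 < y) (hk : 0 < k)
    (hyx : y ≤ x) (hyk : y ≤ k) (hN : x + k + 2 ≤ N) (hN' : x + k + 2 < N) :
    ((x.choose y : ℝ) * ((N - 2 - x).choose (k - y) : ℝ)) / ((N - 2).choose k : ℝ) ≤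
      (((x : ℝ) * k) / ((N : ℝ) - x - k - 2)) ^ y :=
  stmt10_general x y k N hyk hN'
end

section
/- Given knowledge sets K₁, K₂ (directed graphs on V(G)) and a directed edge v₁ → v₂, the condition that the transitive-closure relations satisfy K̄₂ ⊆ K̄₁ ∪ {v₁ → v₂} (closure taken after union) and K̄₁ ⊆ K̄₂ ∪ {v₁ → v₂} holds if and only if K₂ can be obtained from K₁ by a finite sequence of the reversible operations: (1) add or remove the edge v₁ → v₂; (2) if v₃ → v₄ and v₄ → v₅ are both present and v₃ ≠ v₅, add or remove v₃ → v₅; (3) if s → t is present, add or remove any edge other than s → t. -/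
/-!
Write `e` for the edge `v₁ → v₂`. The condition says precisely that `K₁ ∪ {e}` and `K₂ ∪ {e}`
have the same closure. Every operation preserves the closure of `K ∪ {e}` for loopless `K`: an
edge toggled by Op2 is implied by its two-edge path, Op1 only toggles `e`, and Op3 acts only once
the closure is complete. Conversely, a loopless `X` can be grown reversibly to its closure: a
maximal reversibly reachable set between `X` and its closure admits no further Op2 shortcut, so it
contains every pair joined by a path, and if it contains `s → t`, Op3 completes it. Hence
`K₁ → K₁ ∪ {e} → closure = closure → K₂ ∪ {e} → K₂`.
-/

/-- There is a (nontrivial) directed path from `u` to `w` in the knowledge set `K`. -/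
def hasPath {V : Type*} (K : Set (V × V)) (u w : V) : Prop :=
  Relation.TransGen (fun a b => (a, b) ∈ K) u w

/-- The transitive closure of a knowledge set: if `K` has a path from `s` to `t` this is the
complete directed graph on `V`; otherwise it consists of all pairs `u ≠ w` with a path from
`u` to `w` in `K`. -/
def kClosure {V : Type*} (s t : V) (K : Set (V × V)) : Set (V × V) :=
  {p | p.1 ≠ p.2 ∧ (hasPath K s t ∨ hasPath K p.1 p.2)}

/-- Operation 1: add or remove the edge `v₁ → v₂`. -/
def Op1 {V : Type*} (v₁ v₂ : V) (K K' : Set (V × V)) : Prop :=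
  K' = K ∪ {(v₁, v₂)} ∨ K' = K \ {(v₁, v₂)}

/-- Operation 2: if `a → b` and `b → c` are both in `K` and `a ≠ c`, add or remove `a → c`. -/
def Op2 {V : Type*} (K K' : Set (V × V)) : Prop :=
  ∃ a b c : V, a ≠ c ∧ (a, b) ∈ K ∧ (b, c) ∈ K ∧ (K' = K ∪ {(a, c)} ∨ K' = K \ {(a, c)})

/-- Operation 3: if `s → t` is in `K`, add or remove any edge other than `s → t`. -/
def Op3 {V : Type*} (s t : V) (K K' : Set (V × V)) : Prop :=
  (s, t) ∈ K ∧ ∃ e : V × V, e ≠ (s, t) ∧ (K' = K ∪ {e} ∨ K' = K \ {e})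

open Relation

section KnowledgeSets

variable {V : Type*} {s t v₁ v₂ : V}

def KnowledgeStep (s t v₁ v₂ : V) (K K' : Set (V × V)) : Prop :=
  Op1 v₁ v₂ K K' ∨ Op2 K K' ∨ Op3 s t K K'

section Closure

variable {K X Y Z : Set (V × V)} {a b c : V} {p : V × V}

lemma hasPath_of_mem (h : (a, b) ∈ K) : hasPath K a b :=
  TransGen.single h

lemma hasPath_mono (h : X ⊆ Y) : hasPath X a b → hasPath Y a b :=
  fun hp => TransGen.mono (fun _ _ hab => h hab) _ _ hp

lemma mem_kClosure_of_mem (hp : p ∈ K) (hne : p.1 ≠ p.2) : p ∈ kClosure s t K :=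
  ⟨hne, Or.inr (hasPath_of_mem hp)⟩

lemma kClosure_mono (h : X ⊆ Y) : kClosure s t X ⊆ kClosure s t Y :=
  fun _ ⟨hne, hp⟩ => ⟨hne, hp.imp (hasPath_mono h) (hasPath_mono h)⟩

lemma kClosure_eq_of_hasPath (h : hasPath K s t) : kClosure s t K = {p | p.1 ≠ p.2} :=
  Set.ext fun _ => ⟨And.left, fun hne => ⟨hne, Or.inl h⟩⟩

lemma kClosure_trans (hab : (a, b) ∈ kClosure s t K) (hbc : (b, c) ∈ kClosure s t K)
    (hac : a ≠ c) : (a, c) ∈ kClosure s t K := by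
  obtain ⟨-, hst | hab⟩ := hab
  · exact ⟨hac, Or.inl hst⟩
  obtain ⟨-, hst | hbc⟩ := hbc
  · exact ⟨hac, Or.inl hst⟩
  exact ⟨hac, Or.inr (hab.trans hbc)⟩

lemma hasPath_of_forall_mem_kClosure (hst : ¬ hasPath Y s t)
    (h : ∀ p ∈ X, p.1 ≠ p.2 → p ∈ kClosure s t Y) (hp : hasPath X a b) (hab : a ≠ b) :
    hasPath Y a b := by
  have edge : ∀ u w, (u, w) ∈ X → ReflTransGen (fun u w => (u, w) ∈ Y) u w := by
    intro u w huw
    by_cases hne : u = w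
    · exact hne ▸ .refl
    obtain ⟨-, hst' | hp⟩ := h _ huw hne
    exacts [absurd hst' hst, hp.to_reflTransGen]
  obtain h' | h' := reflTransGen_iff_eq_or_transGen.1
    (reflTransGen_closed edge a b hp.to_reflTransGen)
  exacts [absurd h'.symm hab, h']

lemma kClosure_subset_kClosure_iff (hst : s ≠ t) :
    kClosure s t X ⊆ kClosure s t Y ↔ ∀ p ∈ X, p.1 ≠ p.2 → p ∈ kClosure s t Y := by
  refine ⟨fun h p hp hne => h (mem_kClosure_of_mem hp hne), fun h => ?_⟩
  by_cases hY : hasPath Y s t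
  · rw [kClosure_eq_of_hasPath hY]
    exact fun _ => And.left
  have hpath : ∀ {a b}, hasPath X a b → a ≠ b → hasPath Y a b :=
    hasPath_of_forall_mem_kClosure hY h
  rintro p ⟨hne, hp | hp⟩
  exacts [absurd (hpath hp hst) hY, ⟨hne, Or.inr (hpath hp hne)⟩]

lemma kClosure_union_singleton_subset_iff (hst : s ≠ t) {e : V × V} :
    kClosure s t (X ∪ {e}) ⊆ kClosure s t (Y ∪ {e}) ↔
      kClosure s t X ⊆ kClosure s t (Y ∪ {e}) := by
  rw [kClosure_subset_kClosure_iff hst, kClosure_subset_kClosure_iff hst, Set.union_singleton,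
    Set.forall_mem_insert, and_iff_right_iff_imp]
  exact fun _ hne => mem_kClosure_of_mem (Set.mem_union_right _ rfl) hne

lemma kClosure_eq_of_subset_of_subset_union (hst : s ≠ t) (hYZ : Y ⊆ Z) (hZY : Z ⊆ Y ∪ {p})
    (hp : p ∈ kClosure s t Y) : kClosure s t Z = kClosure s t Y := by
  refine subset_antisymm ((kClosure_mono hZY).trans ?_) (kClosure_mono hYZ)
  rw [kClosure_subset_kClosure_iff hst]
  rintro q (hq | rfl) hne
  exacts [mem_kClosure_of_mem hq hne, hp]

lemma mem_of_hasPath (hXY : X ⊆ Y)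
    (hY : ∀ a b c, a ≠ c → (a, b) ∈ Y → (b, c) ∈ Y → (a, c) ∈ Y)
    (h : hasPath X a c) (hac : a ≠ c) : (a, c) ∈ Y := by
  induction h with
  | single h => exact hXY h
  | @tail b c _ hbc ih =>
    by_cases hab : a = b
    · exact hab ▸ hXY hbc
    · exact hY a b c hac (ih hab) (hXY hbc)

end Closure

section Operations

variable {K K' Y : Set (V × V)} {a b c : V} {e : V × V}

lemma mem_iff_of_toggle {p : V × V} (h : K' = K ∪ {e} ∨ K' = K \ {e}) (hp : p ≠ e) :
    p ∈ K' ↔ p ∈ K := by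
  rcases h with rfl | rfl <;> simp [hp]

lemma loopless_iff_of_toggle (h : K' = K ∪ {e} ∨ K' = K \ {e}) (he : e.1 ≠ e.2) :
    (∀ p ∈ K', p.1 ≠ p.2) ↔ ∀ p ∈ K, p.1 ≠ p.2 :=
  forall_congr' fun p => by
    by_cases hp : p = e
    · simp [hp, he]
    · rw [mem_iff_of_toggle h hp]

lemma union_singleton_sdiff_singleton (he : e ∉ Y) : (Y ∪ {e}) \ {e} = Y := by
  rw [Set.union_sdiff_right, Set.sdiff_singleton_eq_self he]

lemma Op1.union_eq (h : Op1 v₁ v₂ K K') : K' ∪ {(v₁, v₂)} = K ∪ {(v₁, v₂)} := by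
  rcases h with rfl | rfl
  · rw [Set.union_assoc, Set.union_self]
  · exact Set.sdiff_union_self

lemma Op2.loopless_iff (h : Op2 K K') : (∀ p ∈ K', p.1 ≠ p.2) ↔ ∀ p ∈ K, p.1 ≠ p.2 :=
  let ⟨_, _, _, hac, _, _, h⟩ := h
  loopless_iff_of_toggle h hac

lemma Op2.kClosure_union_eq (hst : s ≠ t) (hK : ∀ p ∈ K, p.1 ≠ p.2) (h : Op2 K K')
    (E : Set (V × V)) : kClosure s t (K' ∪ E) = kClosure s t (K ∪ E) := by
  obtain ⟨a, b, c, hac, hab, hbc, h⟩ := h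
  have hab' : (a, b) ∈ K \ {(a, c)} := ⟨hab, fun h => hK _ hbc (by simp_all)⟩
  have hbc' : (b, c) ∈ K \ {(a, c)} := ⟨hbc, fun h => hK _ hab (by simp_all)⟩
  have hac' : (a, c) ∈ kClosure s t (K \ {(a, c)} ∪ E) :=
    ⟨hac, Or.inr ((hasPath_of_mem (Or.inl hab')).tail (Or.inl hbc'))⟩
  have hsdiff : K' \ {(a, c)} = K \ {(a, c)} := by
    rcases h with rfl | rfl
    · exact Set.union_sdiff_right
    · exact sdiff_idem
  have hL : ∀ L : Set (V × V), L \ {(a, c)} = K \ {(a, c)} →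
      kClosure s t (L ∪ E) = kClosure s t (K \ {(a, c)} ∪ E) := by
    intro L hLK
    rw [← hLK] at hac' ⊢
    refine kClosure_eq_of_subset_of_subset_union hst
      (Set.union_subset_union_left _ Set.sdiff_subset) (fun q hq => ?_) hac'
    rcases hq with hq | hq
    · by_cases hq' : q = (a, c)
      exacts [Or.inr hq', Or.inl (Or.inl ⟨hq, hq'⟩)]
    · exact Or.inl (Or.inr hq)
  rw [hL K' hsdiff, hL K rfl]

lemma Op3.st_mem_right (h : Op3 s t K K') : (s, t) ∈ K' := by
  obtain ⟨hst, e, he, rfl | rfl⟩ := h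
  · exact Or.inl hst
  · exact ⟨hst, Ne.symm he⟩

lemma knowledgeStep_union_shortcut (hac : a ≠ c) (hab : (a, b) ∈ Y) (hbc : (b, c) ∈ Y)
    (h : (a, c) ∉ Y) :
    KnowledgeStep s t v₁ v₂ Y (Y ∪ {(a, c)}) ∧ KnowledgeStep s t v₁ v₂ (Y ∪ {(a, c)}) Y :=
  ⟨.inr (.inl ⟨a, b, c, hac, hab, hbc, .inl rfl⟩),
    .inr (.inl ⟨a, b, c, hac, .inl hab, .inl hbc,
      .inr (union_singleton_sdiff_singleton h).symm⟩)⟩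

lemma knowledgeStep_union_of_st_mem (hst : (s, t) ∈ Y) (he : e ∉ Y) :
    KnowledgeStep s t v₁ v₂ Y (Y ∪ {e}) ∧ KnowledgeStep s t v₁ v₂ (Y ∪ {e}) Y :=
  have hne : e ≠ (s, t) := fun h => he (h ▸ hst)
  ⟨.inr (.inr ⟨hst, e, hne, .inl rfl⟩),
    .inr (.inr ⟨.inl hst, e, hne, .inr (union_singleton_sdiff_singleton he).symm⟩)⟩

lemma reflTransGen_knowledgeStep_remove_edge :
    ReflTransGen (KnowledgeStep s t v₁ v₂) (K ∪ {(v₁, v₂)}) K := by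
  by_cases h : (v₁, v₂) ∈ K
  · rw [Set.union_eq_self_of_subset_right (Set.singleton_subset_iff.2 h)]
  · exact .single (.inl (.inr (union_singleton_sdiff_singleton h).symm))

end Operations

section Invariant

variable {K K' : Set (V × V)}

open Classical in
/-- Once `s → t` is known, Op3 may create a loop `x → x`, and Op2 through a loop deletes any
edge leaving it, so the closure of `K ∪ {v₁ → v₂}` stops being invariant. Such `K` are
identified with the complete graph instead. -/
def closureUnionOrComplete (s t v₁ v₂ : V) (K : Set (V × V)) : Set (V × V) :=
  if ∀ p ∈ K, p.1 ≠ p.2 then kClosure s t (K ∪ {(v₁, v₂)}) else {p | p.1 ≠ p.2}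

lemma closureUnionOrComplete_of_loopless (hK : ∀ p ∈ K, p.1 ≠ p.2) :
    closureUnionOrComplete s t v₁ v₂ K = kClosure s t (K ∪ {(v₁, v₂)}) :=
  if_pos hK

lemma closureUnionOrComplete_of_st_mem (h : (s, t) ∈ K) :
    closureUnionOrComplete s t v₁ v₂ K = {p | p.1 ≠ p.2} := by
  unfold closureUnionOrComplete
  split_ifs
  · exact kClosure_eq_of_hasPath (hasPath_of_mem (Or.inl h))
  · rfl

lemma closureUnionOrComplete_eq_of_knowledgeStep (hst : s ≠ t) (hv : v₁ ≠ v₂)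
    (h : KnowledgeStep s t v₁ v₂ K K') :
    closureUnionOrComplete s t v₁ v₂ K' = closureUnionOrComplete s t v₁ v₂ K := by
  rcases h with h | h | h
  · unfold closureUnionOrComplete
    rw [h.union_eq, loopless_iff_of_toggle h hv]
  · unfold closureUnionOrComplete
    rw [h.loopless_iff]
    split_ifs with hK
    · exact h.kClosure_union_eq hst hK _
    · rfl
  · rw [closureUnionOrComplete_of_st_mem h.1, closureUnionOrComplete_of_st_mem h.st_mem_right]

lemma closureUnionOrComplete_eq_of_reflTransGen (hst : s ≠ t) (hv : v₁ ≠ v₂)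
    (h : ReflTransGen (KnowledgeStep s t v₁ v₂) K K') :
    closureUnionOrComplete s t v₁ v₂ K' = closureUnionOrComplete s t v₁ v₂ K := by
  induction h with
  | refl => rfl
  | tail _ hstep ih => exact (closureUnionOrComplete_eq_of_knowledgeStep hst hv hstep).trans ih

end Invariant

theorem reflTransGen_knowledgeStep_kClosure [Finite V] (hst : s ≠ t) {X : Set (V × V)}
    (hX : ∀ p ∈ X, p.1 ≠ p.2) :
    ReflTransGen (KnowledgeStep s t v₁ v₂) X (kClosure s t X) ∧
      ReflTransGen (KnowledgeStep s t v₁ v₂) (kClosure s t X) X := by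
  let reachable : Set (Set (V × V)) :=
    {Y | (ReflTransGen (KnowledgeStep s t v₁ v₂) X Y ∧
      ReflTransGen (KnowledgeStep s t v₁ v₂) Y X) ∧ X ⊆ Y ∧ Y ⊆ kClosure s t X}
  obtain ⟨Y, ⟨hreach, hXY, hYX⟩, hmax⟩ := (Set.toFinite reachable).exists_maximal
    ⟨X, ⟨.refl, .refl⟩, subset_rfl, fun p hp => mem_kClosure_of_mem hp (hX p hp)⟩
  have grow : ∀ e ∈ kClosure s t X,
      (e ∉ Y → KnowledgeStep s t v₁ v₂ Y (Y ∪ {e}) ∧ KnowledgeStep s t v₁ v₂ (Y ∪ {e}) Y) →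
        e ∈ Y := by
    intro e he hstep
    by_contra hY
    obtain ⟨hto, hfrom⟩ := hstep hY
    exact hY (hmax ⟨⟨hreach.1.tail hto, hreach.2.head hfrom⟩,
      hXY.trans Set.subset_union_left, Set.union_subset hYX (Set.singleton_subset_iff.2 he)⟩
      Set.subset_union_left (Or.inr rfl))
  have shortcut : ∀ a b c, a ≠ c → (a, b) ∈ Y → (b, c) ∈ Y → (a, c) ∈ Y :=
    fun a b c hac hab hbc =>
      grow _ (kClosure_trans (hYX hab) (hYX hbc) hac) (knowledgeStep_union_shortcut hac hab hbc)
  have hsub : kClosure s t X ⊆ Y := by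
    rintro p ⟨hne, hp | hp⟩
    · exact grow p ⟨hne, Or.inl hp⟩
        (knowledgeStep_union_of_st_mem (mem_of_hasPath hXY shortcut hp hst))
    · exact mem_of_hasPath hXY shortcut hp hne
  rwa [← subset_antisymm hYX hsub]

theorem reflTransGen_knowledgeStep_iff [Finite V] (hst : s ≠ t) (hv : v₁ ≠ v₂) {K₁ K₂ : Set (V × V)}
    (hK₁ : ∀ p ∈ K₁, p.1 ≠ p.2) (hK₂ : ∀ p ∈ K₂, p.1 ≠ p.2) :
    ReflTransGen (KnowledgeStep s t v₁ v₂) K₁ K₂ ↔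
      kClosure s t (K₂ ∪ {(v₁, v₂)}) = kClosure s t (K₁ ∪ {(v₁, v₂)}) := by
  refine ⟨fun h => ?_, fun h => ?_⟩
  · have hinv := closureUnionOrComplete_eq_of_reflTransGen hst hv h
    rwa [closureUnionOrComplete_of_loopless hK₁, closureUnionOrComplete_of_loopless hK₂] at hinv
  · have hloopless : ∀ K : Set (V × V), (∀ p ∈ K, p.1 ≠ p.2) →
        ∀ p ∈ K ∪ {(v₁, v₂)}, p.1 ≠ p.2 := fun K hK p hp =>
      hp.elim (hK p) fun hp => (Set.mem_singleton_iff.1 hp) ▸ hv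
    obtain ⟨h₁, -⟩ :=
      reflTransGen_knowledgeStep_kClosure (v₁ := v₁) (v₂ := v₂) hst (hloopless K₁ hK₁)
    obtain ⟨-, h₂⟩ :=
      reflTransGen_knowledgeStep_kClosure (v₁ := v₁) (v₂ := v₂) hst (hloopless K₂ hK₂)
    rw [h] at h₂
    exact (ReflTransGen.single (.inl (.inl rfl))).trans
      (h₁.trans (h₂.trans reflTransGen_knowledgeStep_remove_edge))

end KnowledgeSets

theorem stmt15 {V : Type*} [Fintype V] (s t v₁ v₂ : V) (hst : s ≠ t) (hv : v₁ ≠ v₂)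
    (K₁ K₂ : Set (V × V)) (hK₁ : ∀ p ∈ K₁, p.1 ≠ p.2) (hK₂ : ∀ p ∈ K₂, p.1 ≠ p.2) :
    (kClosure s t K₂ ⊆ kClosure s t (K₁ ∪ {(v₁, v₂)}) ∧
        kClosure s t K₁ ⊆ kClosure s t (K₂ ∪ {(v₁, v₂)})) ↔
      Relation.ReflTransGen
        (fun K K' => Op1 v₁ v₂ K K' ∨ Op2 K K' ∨ Op3 s t K K') K₁ K₂ := by
  refine ((kClosure_union_singleton_subset_iff hst).symm.and
    (kClosure_union_singleton_subset_iff hst).symm).trans ?_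
  rw [← subset_antisymm_iff]
  exact (reflTransGen_knowledgeStep_iff hst hv hK₁ hK₂).symm
end

section
/- In the monotone switching network G' shown in Theorem 1 (Section 2, easy inputs), the constructed certain-knowledge switching network built by choosing an ordering v₁,…,v_{N−2} of V(G)\{s,t} and taking knowledge-set vertices K_{V_i} with V_i = {v₁,…,v_i} accepts any input graph G(P,V₀,L,∅,φ) (path P of length k+1 from s to t mapped via φ onto V₀, plus the edges s → v for all v ∈ L) whose path vertices appear in increasing order in the chosen ordering. In particular a uniformly random ordering accepts any fixed such input with probability at least 1/k!. -/
/-!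
Along an ordering in which the path vertices are sorted, each path vertex is reached from its
predecessor on the path, which comes earlier, and every other vertex directly from `s`.
For the count, every ordering `σ` sorts the path vertices once the path is relabelled by a
suitable `π ∈ S_k`, and relabelling by `π` does not change the number of such orderings, because
`π` extends to a permutation of all vertices. Hence `M! ≤ k! · #{σ | σ sorts the path}`.
-/

open scoped Classical

open Finset

section Acceptance

variable {V : Type*} {M k : ℕ}

/-- `E` is the input graph `G(P, V₀, L, ∅, φ)`: the path `s → v (g 0) → ⋯ → v (g (k-1)) → t`
plus the edges `s → v j` for every `j` off the path. -/
def IsPathInput (s t : V) (v : Fin M → V) (hk : 1 ≤ k) (g : Fin k → Fin M)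
    (E : V → V → Prop) : Prop :=
  ∀ a b : V, E a b ↔
    ((a = s ∧ b = v (g ⟨0, hk⟩)) ∨
      (∃ i : Fin k, ∃ h : (i : ℕ) + 1 < k, a = v (g i) ∧ b = v (g ⟨(i : ℕ) + 1, h⟩)) ∨
      (a = v (g ⟨k - 1, Nat.sub_one_lt_of_lt hk⟩) ∧ b = t) ∨
      (a = s ∧ ∃ j : Fin M, b = v j ∧ ∀ i : Fin k, g i ≠ j))

/-- The certain-knowledge network of the ordering `v` accepts `E`: the move
`K_{V_{i-1}} → K_{V_i}` uses an edge `s → v i` or `v j → v i` with `j < i`, and the last move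
uses an edge `v i → t`. It is reducible so that `filter` picks the same decidability instance
as for the unfolded predicate. -/
abbrev Accepts (s t : V) (v : Fin M → V) (E : V → V → Prop) : Prop :=
  (∀ i : Fin M, E s (v i) ∨ ∃ j : Fin M, j < i ∧ E (v j) (v i)) ∧ ∃ i : Fin M, E (v i) t

theorem IsPathInput.accepts {s t : V} {v : Fin M → V} {hk : 1 ≤ k} {g : Fin k → Fin M}
    {E : V → V → Prop} (hE : IsPathInput s t v hk g E) (hg : StrictMono g) :
    Accepts s t v E := by
  refine ⟨fun i => ?_, ⟨g ⟨k - 1, by omega⟩, (hE _ _).2 (Or.inr (Or.inr (Or.inl ⟨rfl, rfl⟩)))⟩⟩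
  by_cases hi : ∃ j, g j = i
  · obtain ⟨⟨_ | n, hj⟩, rfl⟩ := hi
    · exact Or.inl ((hE _ _).2 (Or.inl ⟨rfl, rfl⟩))
    · refine Or.inr ⟨g ⟨n, by omega⟩, hg (Fin.mk_lt_mk.2 n.lt_succ_self), ?_⟩
      exact (hE _ _).2 (Or.inr (Or.inl ⟨⟨n, by omega⟩, hj, rfl, rfl⟩))
  · push Not at hi
    exact Or.inl ((hE _ _).2 (Or.inr (Or.inr (Or.inr ⟨rfl, i, rfl, hi⟩))))

theorem IsPathInput.comp_perm {s t : V} {v : Fin M → V} {hk : 1 ≤ k} {g : Fin k → Fin M}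
    {E : V → V → Prop} (hE : IsPathInput s t v hk g E) (σ : Equiv.Perm (Fin M)) :
    IsPathInput s t (v ∘ σ) hk (σ.symm ∘ g) E := by
  intro a b
  rw [hE]
  simp only [Function.comp_apply, Equiv.apply_symm_apply, ne_eq, Equiv.symm_apply_eq]
  rw [σ.surjective.exists]

end Acceptance

theorem exists_perm_strictMono_comp {β : Type*} [LinearOrder β] {n : ℕ} {f : Fin n → β}
    (hf : Function.Injective f) : ∃ π : Equiv.Perm (Fin n), StrictMono (f ∘ π) :=
  ⟨Tuple.sort f, (Tuple.monotone_sort f).strictMono_of_injective (hf.comp (Tuple.sort f).injective)⟩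

section Counting

variable {β : Type*} [Fintype β] [LinearOrder β] {k : ℕ} {g : Fin k → β}

theorem card_strictMono_perm_comp_le (hg : Function.Injective g) (π : Equiv.Perm (Fin k)) :
    #{σ : Equiv.Perm β | StrictMono (σ.symm ∘ g ∘ π)} ≤
      #{σ : Equiv.Perm β | StrictMono (σ.symm ∘ g)} := by
  -- `ρ` extends `π` along `g`, so `σ ↦ ρ⁻¹ * σ` maps orderings sorting `g ∘ π` to ones sorting `g`
  set ρ := π.viaFintypeEmbedding ⟨g, hg⟩
  have hρ : ∀ σ : Equiv.Perm β, (ρ⁻¹ * σ).symm ∘ g = σ.symm ∘ g ∘ π := fun σ => by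
    ext i
    simpa [Equiv.Perm.mul_def, Equiv.Perm.inv_def] using
      congrArg σ.symm (π.viaFintypeEmbedding_apply_image ⟨g, hg⟩ i)
  refine card_le_card_of_injOn (ρ⁻¹ * ·) (fun σ hσ => ?_) (fun σ _ τ _ h => mul_left_cancel h)
  simp only [coe_filter, mem_univ, true_and, Set.mem_ofPred_eq] at hσ ⊢
  rwa [hρ]

theorem factorial_card_le_factorial_mul_card_strictMono (hg : Function.Injective g) :
    (Fintype.card β).factorial ≤ k.factorial * #{σ : Equiv.Perm β | StrictMono (σ.symm ∘ g)} := by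
  have hcover : (univ : Finset (Equiv.Perm β)) ⊆
      (univ : Finset (Equiv.Perm (Fin k))).biUnion
        fun π => {σ : Equiv.Perm β | StrictMono (σ.symm ∘ g ∘ π)} := fun σ _ => by
    obtain ⟨π, hπ⟩ := exists_perm_strictMono_comp (σ.symm.injective.comp hg)
    simpa using ⟨π, hπ⟩
  calc (Fintype.card β).factorial = #(univ : Finset (Equiv.Perm β)) := by
        rw [card_univ, Fintype.card_perm]
    _ ≤ ∑ π : Equiv.Perm (Fin k), #{σ : Equiv.Perm β | StrictMono (σ.symm ∘ g ∘ π)} :=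
      (card_le_card hcover).trans card_biUnion_le
    _ ≤ ∑ _π : Equiv.Perm (Fin k), #{σ : Equiv.Perm β | StrictMono (σ.symm ∘ g)} :=
      sum_le_sum fun π _ => card_strictMono_perm_comp_le hg π
    _ = k.factorial * #{σ : Equiv.Perm β | StrictMono (σ.symm ∘ g)} := by
      rw [sum_const, card_univ, Fintype.card_perm, Fintype.card_fin, smul_eq_mul]

end Counting

/-- The certain-knowledge switching network built from an ordering `v₁, …, v_M` of
`V(G) \ {s,t}` (with knowledge-set vertices `K_{V_i}`, `V_i = {v₁,…,v_i}`) accepts an input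
graph `G(P, V₀, L, ∅, φ)` — a path `s → w₁ → ⋯ → w_k → t` on the vertices `v (g 0), …,
v (g (k-1))` together with all edges `s → v` for `v ∈ L` (the non-path vertices) —
whenever the path vertices appear in increasing order in the ordering (`StrictMono g`):
each step `K_{V_{i-1}} → K_{V_i}` can be made with an edge `s → v_i` of `G` or an edge
`v_j → v_i` of `G` with `j < i`, and there is a final edge of `G` into `t`.
Moreover, a uniformly random ordering accepts any fixed such input with probability at
least `1/k!`: the number of permutations `σ` for which the reordered network `v ∘ σ`
accepts is at least `M!/k!`. -/
theorem stmt17 {V : Type*} (s t : V) (M : ℕ) (v : Fin M → V)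
    (k : ℕ) (hk : 1 ≤ k) (g : Fin k → Fin M) (hginj : Function.Injective g)
    (E : V → V → Prop)
    (hE : ∀ a b : V, E a b ↔
      ((a = s ∧ b = v (g ⟨0, hk⟩)) ∨
        (∃ i : Fin k, ∃ h : (i : ℕ) + 1 < k, a = v (g i) ∧ b = v (g ⟨(i : ℕ) + 1, h⟩)) ∨
        (a = v (g ⟨k - 1, by omega⟩) ∧ b = t) ∨
        (a = s ∧ ∃ j : Fin M, b = v j ∧ ∀ i : Fin k, g i ≠ j))) :
    (StrictMono g →
      (∀ i : Fin M, E s (v i) ∨ ∃ j : Fin M, j < i ∧ E (v j) (v i)) ∧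
        ∃ i : Fin M, E (v i) t) ∧
      Nat.factorial k *
          (Finset.univ.filter (fun σ : Equiv.Perm (Fin M) =>
            (∀ i : Fin M, E s (v (σ i)) ∨ ∃ j : Fin M, j < i ∧ E (v (σ j)) (v (σ i))) ∧
              ∃ i : Fin M, E (v (σ i)) t)).card ≥
        Nat.factorial M := by
  have hpath : IsPathInput s t v hk g E := hE
  refine ⟨hpath.accepts, ?_⟩
  calc Nat.factorial M = (Fintype.card (Fin M)).factorial := by rw [Fintype.card_fin]
    _ ≤ k.factorial * #{σ : Equiv.Perm (Fin M) | StrictMono (σ.symm ∘ g)} :=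
      factorial_card_le_factorial_mul_card_strictMono hginj
    _ ≤ _ := Nat.mul_le_mul_left _ <| card_le_card <| monotone_filter_right _
      fun σ _ hσ => (hpath.comp_perm σ).accepts hσ
end
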